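/- Let n ≥ 1, let L_1, …, L_n be nonzero real numbers, let X_1, …, X_{2n} be the anisotropic Heisenberg vector fields on ℝ^{2n+1}, let w_1, …, w_{2n} be the weights w_j = 1/(2|L_j|) for 1 ≤ j ≤ n and w_j = 1/(2|L_{j−n}|) for n+1 ≤ j ≤ 2n, and set Q = 2n + 2. Define ρ(x_1,…,x_{2n},t) = ( (Σ_{j=1}^{n} 2|L_j| x_j² + Σ_{j=n+1}^{2n} 2|L_{j−n}| x_j²)² + 16 t² )^{1/4}. Fix 1 < p < ∞ with p ≠ Q, and let u = ρ^{(p−Q)/(p−1)}. Then u satisfies the weighted p-Laplace equation Δ_p u = M(u)^{p−2} Σ_{i=1}^{2n} w_i X_i(X_i u) + (p−2) M(u)^{p−4} Σ_{i,j=1}^{2n} w_i w_j X_i(X_j u) · X_i u · X_j u = 0 at every point of ℝ^{2n+1} \ {0} where M(u) ≠ 0. -/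

import Mathlib

/-- Partial derivative of `f : ℝ^m → ℝ` in the `i`-th coordinate direction. -/
noncomputable def pderiv' {m : ℕ} (i : Fin m) (f : (Fin m → ℝ) → ℝ) (q : Fin m → ℝ) : ℝ :=
  fderiv ℝ f q (Pi.single i 1)

/-- The anisotropic Heisenberg vector fields on ℝ^{2n+1}. -/
noncomputable def X (n : ℕ) (L : Fin n → ℝ) (j : Fin (2*n))
    (f : (Fin (2*n+1) → ℝ) → ℝ) (q : Fin (2*n+1) → ℝ) : ℝ :=
  pderiv' ⟨(j : ℕ), by have := j.isLt; omega⟩ f q +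
    (if h : (j : ℕ) < n then
        -(L ⟨(j : ℕ), h⟩) * q ⟨(j : ℕ) + n, by have := j.isLt; omega⟩
      else
        (L ⟨(j : ℕ) - n, by have := j.isLt; omega⟩) * q ⟨(j : ℕ) - n, by have := j.isLt; omega⟩) *
      pderiv' ⟨2*n, by omega⟩ f q

/-- The weights `w_j = 1/(2|L_j|)` for `1 ≤ j ≤ n` and `w_j = 1/(2|L_{j−n}|)` for
`n+1 ≤ j ≤ 2n`. -/
noncomputable def wgt (n : ℕ) (L : Fin n → ℝ) (j : Fin (2*n)) : ℝ :=
  if h : (j : ℕ) < n then 1 / (2 * |L ⟨(j : ℕ), h⟩|)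
  else 1 / (2 * |L ⟨(j : ℕ) - n, by have := j.isLt; omega⟩|)

/-- `M(f) = (Σ_{j=1}^{2n} w_j (X_j f)²)^{1/2}`. -/
noncomputable def Mfun (n : ℕ) (L : Fin n → ℝ) (f : (Fin (2*n+1) → ℝ) → ℝ)
    (q : Fin (2*n+1) → ℝ) : ℝ :=
  Real.sqrt (∑ j : Fin (2*n), wgt n L j * (X n L j f q)^2)

/-- The gauge `ρ = ((Σ_{j=1}^{n} 2|L_j| x_j² + Σ_{j=n+1}^{2n} 2|L_{j−n}| x_j²)² + 16 t²)^{1/4}`. -/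
noncomputable def rho (n : ℕ) (L : Fin n → ℝ) (q : Fin (2*n+1) → ℝ) : ℝ :=
  ((∑ j : Fin (2*n),
      (if h : (j : ℕ) < n then 2 * |L ⟨(j : ℕ), h⟩|
       else 2 * |L ⟨(j : ℕ) - n, by have := j.isLt; omega⟩|) *
        (q ⟨(j : ℕ), by have := j.isLt; omega⟩)^2)^2
    + 16 * (q ⟨2*n, by omega⟩)^2) ^ ((1:ℝ)/4)

/-!
Write `S = Σ 2|L_j| x_j²` and `F = S² + 16 t² = ρ⁴`. Each `X_j` is a derivation, and
`X_j F = 4 G_j`, `X_i G_j = H_ij` for explicit polynomials `G`, `H`; hence `u = F^(γ/4)` with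
`γ = (p - Q)/(p - 1)` has `X_j u = γ F^(γ/4-1) G_j` and
`X_i X_j u = γ F^(γ/4-2) ((γ - 4) G_i G_j + F H_ij)`.
With the weights `w_j = 1/(2|L_j|)` the twisted terms `∓L_j x_{j±n}` of `x_j` and `x_{j+n}`
cancel in pairs, giving the moments `Σ w G² = S F`, `Σ w H_ii = (Q + 2) S` and
`Σ w_i w_j G_i G_j H_ij = 3 S² F`. Substituting them, `Δ_p u` becomes a multiple of
`γ (p - 1) + Q - p = 0`.
-/

open Finset

namespace AnisotropicHeisenberg

section PLaplacian

variable {ι : Type*} [Fintype ι]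

/-- `v i` and `D i j` stand for `X_i u` and `X_i (X_j u)` at a point. -/
noncomputable def weightedPLaplacian (w v : ι → ℝ) (D : ι → ι → ℝ) (p : ℝ) : ℝ :=
  √(∑ i, w i * v i ^ 2) ^ (p - 2) * ∑ i, w i * D i i
    + (p - 2) * √(∑ i, w i * v i ^ 2) ^ (p - 4) * ∑ i, ∑ j, w i * w j * D i j * v i * v j

theorem weightedPLaplacian_radial_eq_zero {w g : ι → ℝ} {H : ι → ι → ℝ}
    {S F Q γ p : ℝ} (a b : ℝ)
    (hg : ∑ i, w i * g i ^ 2 = S * F) (hH : ∑ i, w i * H i i = (Q + 2) * S)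
    (hgHg : ∑ i, ∑ j, w i * w j * g i * g j * H i j = 3 * S ^ 2 * F)
    (hγ : γ * (p - 1) = p - Q) (hM : √(∑ i, w i * (a * g i) ^ 2) ≠ 0) :
    weightedPLaplacian w (fun i => a * g i)
      (fun i j => b * ((γ - 4) * g i * g j + F * H i j)) p = 0 := by
  set M := √(∑ i, w i * (a * g i) ^ 2)
  have hM2 : M ^ 2 = a ^ 2 * (S * F) := by
    rw [Real.sq_sqrt (Real.sqrt_ne_zero'.1 hM).le, ← hg, mul_sum]
    exact sum_congr rfl fun i _ => by ring
  have hpow : M ^ (p - 2) = M ^ (p - 4) * M ^ 2 := by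
    rw [show p - 2 = p - 4 + (2 : ℕ) by push_cast; ring, Real.rpow_add_natCast hM]
  have hdiag : ∑ i, w i * (b * ((γ - 4) * g i * g i + F * H i i))
      = b * ((γ - 4) * ∑ i, w i * g i ^ 2 + F * ∑ i, w i * H i i) := by
    simp only [mul_sum, ← sum_add_distrib]
    exact sum_congr rfl fun i _ => by ring
  have hdouble :
      ∑ i, ∑ j, w i * w j * (b * ((γ - 4) * g i * g j + F * H i j)) * (a * g i) * (a * g j)
      = a ^ 2 * b * ((γ - 4) * ((∑ i, w i * g i ^ 2) * ∑ j, w j * g j ^ 2)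
        + F * ∑ i, ∑ j, w i * w j * g i * g j * H i j) := by
    rw [sum_mul_sum]
    simp only [mul_sum, ← sum_add_distrib]
    exact sum_congr rfl fun i _ => sum_congr rfl fun j _ => by ring
  rw [weightedPLaplacian, hdiag, hdouble, hpow, hM2, hg, hH, hgHg]
  linear_combination M ^ (p - 4) * a ^ 2 * b * S ^ 2 * F ^ 2 * hγ

end PLaplacian

variable {n : ℕ}

def partner (j : Fin (2*n)) : Fin (2*n) :=
  if h : (j : ℕ) < n then ⟨j + n, by omega⟩ else ⟨j - n, by omega⟩

def coeff (L : Fin n → ℝ) (j : Fin (2*n)) : ℝ :=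
  if h : (j : ℕ) < n then 2 * |L ⟨j, h⟩| else 2 * |L ⟨j - n, by omega⟩|

def drift (L : Fin n → ℝ) (j : Fin (2*n)) : ℝ :=
  if h : (j : ℕ) < n then -L ⟨j, h⟩ else L ⟨j - n, by omega⟩

def lower (j : Fin n) : Fin (2*n) := ⟨j, by omega⟩

def upper (j : Fin n) : Fin (2*n) := ⟨j + n, by omega⟩

theorem sum_fin_two_mul {M : Type*} [AddCommMonoid M] (g : Fin (2*n) → M) :
    ∑ j, g j = ∑ j : Fin n, (g (lower j) + g (upper j)) := by
  rw [← (finCongr (two_mul n).symm).sum_comp, Fin.sum_univ_add, ← sum_add_distrib]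
  congr! 3
  ext
  simp [upper]

variable (L : Fin n → ℝ) (j : Fin n)

@[simp] theorem partner_lower : partner (lower j) = upper j := by
  simp [partner, lower, upper]

@[simp] theorem partner_upper : partner (upper j) = lower j := by
  simp [partner, lower, upper]

@[simp] theorem coeff_lower : coeff L (lower j) = 2 * |L j| := by simp [coeff, lower]

@[simp] theorem coeff_upper : coeff L (upper j) = 2 * |L j| := by simp [coeff, upper]

@[simp] theorem drift_lower : drift L (lower j) = -L j := by simp [drift, lower]

@[simp] theorem drift_upper : drift L (upper j) = L j := by simp [drift, upper]

@[simp] theorem wgt_lower : wgt n L (lower j) = 1 / (2 * |L j|) := by simp [wgt, lower]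

@[simp] theorem wgt_upper : wgt n L (upper j) = 1 / (2 * |L j|) := by simp [wgt, upper]

theorem partner_ne (i : Fin (2*n)) : partner i ≠ i := by
  intro h
  have := congrArg Fin.val h
  unfold partner at this
  split at this <;> simp at this <;> omega

theorem partner_partner (i : Fin (2*n)) : partner (partner i) = i := by
  ext
  unfold partner
  split_ifs with h1 h2 h2 <;> simp only at h2 ⊢ <;> omega

theorem wgt_eq_inv_coeff (i : Fin (2*n)) : wgt n L i = (coeff L i)⁻¹ := by
  unfold wgt coeff
  split <;> simp

variable {L}

theorem coeff_pos (hL : ∀ j, L j ≠ 0) (i : Fin (2*n)) : 0 < coeff L i := by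
  unfold coeff; split <;> simp [hL]

theorem wgt_mul_coeff (hL : ∀ j, L j ≠ 0) (i : Fin (2*n)) : wgt n L i * coeff L i = 1 := by
  rw [wgt_eq_inv_coeff]
  exact inv_mul_cancel₀ (coeff_pos hL i).ne'

section Moments

variable (L : Fin n → ℝ) (q : Fin (2*n+1) → ℝ)

def quadForm : ℝ := ∑ j : Fin (2*n), coeff L j * q j.castSucc ^ 2

def quartic : ℝ := quadForm L q ^ 2 + 16 * q (Fin.last _) ^ 2

def radial (i : Fin (2*n)) (q : Fin (2*n+1) → ℝ) : ℝ := coeff L i * q i.castSucc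

def vertical (i : Fin (2*n)) (q : Fin (2*n+1) → ℝ) : ℝ := drift L i * q (partner i).castSucc

def quarticGrad (i : Fin (2*n)) (q : Fin (2*n+1) → ℝ) : ℝ :=
  radial L i q * quadForm L q + 8 * q (Fin.last _) * vertical L i q

def quarticHess (i j : Fin (2*n)) (q : Fin (2*n+1) → ℝ) : ℝ :=
  2 * radial L i q * radial L j q + (if i = j then quadForm L q * coeff L j else 0)
    + (if i = partner j then 8 * q (Fin.last _) * drift L j else 0)
    + 8 * vertical L i q * vertical L j q

theorem quadForm_eq_sum_pairs : quadForm L q =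
    ∑ j : Fin n, 2 * |L j| * (q (lower j).castSucc ^ 2 + q (upper j).castSucc ^ 2) := by
  rw [quadForm, sum_fin_two_mul]
  simp [mul_add]

theorem rho_rpow (γ : ℝ) : rho n L q ^ γ = quartic L q ^ (γ / 4) := by
  have hF : 0 ≤ quartic L q := by unfold quartic; positivity
  rw [show rho n L q = quartic L q ^ ((1 : ℝ) / 4) from rfl, ← Real.rpow_mul hF]
  ring_nf

variable {L}

theorem quartic_pos (hL : ∀ j, L j ≠ 0) (hq : q ≠ 0) : 0 < quartic L q := by
  have hterm : ∀ j ∈ univ, 0 ≤ coeff L j * q j.castSucc ^ 2 := fun j _ =>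
    mul_nonneg (coeff_pos hL j).le (sq_nonneg _)
  contrapose! hq
  have hS : quadForm L q ^ 2 = 0 ∧ q (Fin.last _) ^ 2 = 0 := by
    unfold quartic at hq
    constructor <;> nlinarith [sq_nonneg (quadForm L q), sq_nonneg (q (Fin.last _))]
  have hx := (sum_eq_zero_iff_of_nonneg hterm).1 (pow_eq_zero_iff two_ne_zero |>.1 hS.1)
  ext k
  cases k using Fin.lastCases with
  | last => simpa using hS.2
  | cast j => simpa [(coeff_pos hL j).ne'] using hx j (mem_univ j)

theorem sum_wgt_radial_sq (hL : ∀ j, L j ≠ 0) :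
    ∑ i, wgt n L i * radial L i q ^ 2 = quadForm L q := by
  refine sum_congr rfl fun i _ => ?_
  rw [radial]
  linear_combination coeff L i * q i.castSucc ^ 2 * wgt_mul_coeff hL i

theorem sum_wgt_radial_mul_vertical :
    ∑ i, wgt n L i * radial L i q * vertical L i q = 0 := by
  rw [sum_fin_two_mul]
  refine sum_eq_zero fun j _ => ?_
  simp only [radial, vertical, coeff_lower, coeff_upper, drift_lower, drift_upper, wgt_lower,
    wgt_upper, partner_lower, partner_upper]
  ring

theorem sum_wgt_vertical_sq (hL : ∀ j, L j ≠ 0) :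
    ∑ i, wgt n L i * vertical L i q ^ 2 = quadForm L q / 4 := by
  rw [sum_fin_two_mul, quadForm_eq_sum_pairs, sum_div]
  refine sum_congr rfl fun j _ => ?_
  simp only [vertical, drift_lower, drift_upper, wgt_lower, wgt_upper, partner_lower,
    partner_upper]
  have hLj : |L j| ≠ 0 := abs_ne_zero.mpr (hL j)
  field_simp
  rw [sq_abs]
  ring

theorem sum_wgt_mul_coeff (hL : ∀ j, L j ≠ 0) : ∑ i, wgt n L i * coeff L i = 2 * n := by
  simp [wgt_mul_coeff hL]

theorem sum_wgt_mul_wgt_partner_drift (f : Fin (2*n) → ℝ) :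
    ∑ i, wgt n L i * wgt n L (partner i) * drift L (partner i) * f i * f (partner i) = 0 := by
  rw [sum_fin_two_mul]
  refine sum_eq_zero fun j _ => ?_
  simp only [drift_lower, drift_upper, wgt_lower, wgt_upper, partner_lower, partner_upper]
  ring

theorem sum_wgt_grad_mul_radial (hL : ∀ j, L j ≠ 0) :
    ∑ i, wgt n L i * quarticGrad L i q * radial L i q = quadForm L q ^ 2 := by
  calc _ = quadForm L q * ∑ i, wgt n L i * radial L i q ^ 2
          + 8 * q (Fin.last _) * ∑ i, wgt n L i * radial L i q * vertical L i q := by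
        rw [mul_sum, mul_sum, ← sum_add_distrib]
        exact sum_congr rfl fun i _ => by rw [quarticGrad]; ring
    _ = quadForm L q ^ 2 := by
        rw [sum_wgt_radial_sq q hL, sum_wgt_radial_mul_vertical]; ring

theorem sum_wgt_grad_mul_vertical (hL : ∀ j, L j ≠ 0) :
    ∑ i, wgt n L i * quarticGrad L i q * vertical L i q
      = 2 * q (Fin.last _) * quadForm L q := by
  calc _ = quadForm L q * ∑ i, wgt n L i * radial L i q * vertical L i q
          + 8 * q (Fin.last _) * ∑ i, wgt n L i * vertical L i q ^ 2 := by
        rw [mul_sum, mul_sum, ← sum_add_distrib]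
        exact sum_congr rfl fun i _ => by rw [quarticGrad]; ring
    _ = 2 * q (Fin.last _) * quadForm L q := by
        rw [sum_wgt_radial_mul_vertical, sum_wgt_vertical_sq q hL]; ring

theorem sum_wgt_grad_sq (hL : ∀ j, L j ≠ 0) :
    ∑ i, wgt n L i * quarticGrad L i q ^ 2 = quadForm L q * quartic L q := by
  calc _ = quadForm L q * ∑ i, wgt n L i * quarticGrad L i q * radial L i q
          + 8 * q (Fin.last _) * ∑ i, wgt n L i * quarticGrad L i q * vertical L i q := by
        rw [mul_sum, mul_sum, ← sum_add_distrib]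
        exact sum_congr rfl fun i _ => by rw [sq, quarticGrad]; ring
    _ = quadForm L q * quartic L q := by
        rw [sum_wgt_grad_mul_radial q hL, sum_wgt_grad_mul_vertical q hL, quartic]; ring

theorem sum_wgt_hess_self (hL : ∀ j, L j ≠ 0) :
    ∑ i, wgt n L i * quarticHess L i i q = (2 * n + 4) * quadForm L q := by
  calc _ = 2 * ∑ i, wgt n L i * radial L i q ^ 2 + quadForm L q * ∑ i, wgt n L i * coeff L i
          + 8 * ∑ i, wgt n L i * vertical L i q ^ 2 := by
        rw [mul_sum, mul_sum, mul_sum, ← sum_add_distrib, ← sum_add_distrib]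
        refine sum_congr rfl fun i _ => ?_
        rw [quarticHess, if_pos rfl, if_neg (partner_ne i).symm]
        ring
    _ = (2 * n + 4) * quadForm L q := by
        rw [sum_wgt_radial_sq q hL, sum_wgt_mul_coeff hL, sum_wgt_vertical_sq q hL]; ring

theorem sum_wgt_mul_hess (hL : ∀ j, L j ≠ 0) (i : Fin (2*n)) :
    ∑ j, wgt n L j * quarticGrad L j q * quarticHess L i j q
      = 2 * quadForm L q ^ 2 * radial L i q + quadForm L q * quarticGrad L i q
        + 8 * q (Fin.last _) * (wgt n L (partner i) * quarticGrad L (partner i) q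
          * drift L (partner i))
        + 16 * q (Fin.last _) * quadForm L q * vertical L i q := by
  have hpartner : ∀ j, i = partner j ↔ j = partner i := fun j =>
    ⟨fun h => h ▸ (partner_partner j).symm, fun h => h ▸ (partner_partner i).symm⟩
  calc _ = 2 * radial L i q * ∑ j, wgt n L j * quarticGrad L j q * radial L j q
          + ∑ j, (if j = i then quadForm L q * (wgt n L j * coeff L j) * quarticGrad L j q
            else 0)
          + ∑ j, (if j = partner i then 8 * q (Fin.last _) *
            (wgt n L j * quarticGrad L j q * drift L j) else 0)
          + 8 * vertical L i q * ∑ j, wgt n L j * quarticGrad L j q * vertical L j q := by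
        rw [mul_sum, mul_sum, ← sum_add_distrib, ← sum_add_distrib, ← sum_add_distrib]
        refine sum_congr rfl fun j _ => ?_
        rw [quarticHess, if_congr eq_comm rfl rfl, if_congr (hpartner j) rfl rfl]
        split_ifs <;> ring
    _ = _ := by
        rw [sum_ite_eq', sum_ite_eq', if_pos (mem_univ _), if_pos (mem_univ _),
          wgt_mul_coeff hL, sum_wgt_grad_mul_radial q hL, sum_wgt_grad_mul_vertical q hL]
        ring

theorem sum_wgt_grad_hess_grad (hL : ∀ j, L j ≠ 0) :
    ∑ i, ∑ j, wgt n L i * wgt n L j * quarticGrad L i q * quarticGrad L j q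
      * quarticHess L i j q = 3 * quadForm L q ^ 2 * quartic L q := by
  calc _ = ∑ i, wgt n L i * quarticGrad L i q
          * ∑ j, wgt n L j * quarticGrad L j q * quarticHess L i j q := by
        refine sum_congr rfl fun i _ => ?_
        rw [mul_sum]
        exact sum_congr rfl fun j _ => by ring
    _ = 2 * quadForm L q ^ 2 * ∑ i, wgt n L i * quarticGrad L i q * radial L i q
          + quadForm L q * ∑ i, wgt n L i * quarticGrad L i q ^ 2
          + 8 * q (Fin.last _) * ∑ i, wgt n L i * wgt n L (partner i) * drift L (partner i)
            * quarticGrad L i q * quarticGrad L (partner i) q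
          + 16 * q (Fin.last _) * quadForm L q
            * ∑ i, wgt n L i * quarticGrad L i q * vertical L i q := by
        simp only [sum_wgt_mul_hess q hL, mul_sum, ← sum_add_distrib]
        exact sum_congr rfl fun i _ => by ring
    _ = 3 * quadForm L q ^ 2 * quartic L q := by
        rw [sum_wgt_grad_mul_radial q hL, sum_wgt_grad_sq q hL,
          sum_wgt_mul_wgt_partner_drift (quarticGrad L · q), sum_wgt_grad_mul_vertical q hL,
          quartic]
        ring

end Moments

section Derivation

open Filter Topology

variable (L : Fin n → ℝ) (j : Fin (2*n)) {f g : (Fin (2*n+1) → ℝ) → ℝ}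
  {q : Fin (2*n+1) → ℝ}

def horizontal (q : Fin (2*n+1) → ℝ) : Fin (2*n+1) → ℝ :=
  Pi.single j.castSucc 1 + vertical L j q • Pi.single (Fin.last _) 1

theorem X_eq_fderiv (f : (Fin (2*n+1) → ℝ) → ℝ) (q : Fin (2*n+1) → ℝ) :
    X n L j f q = fderiv ℝ f q (horizontal L j q) := by
  rw [horizontal, map_add, map_smul, smul_eq_mul, X, pderiv', pderiv', vertical, drift, partner]
  split_ifs <;> rfl

theorem X_congr (h : f =ᶠ[𝓝 q] g) : X n L j f q = X n L j g q := by
  rw [X_eq_fderiv, X_eq_fderiv, h.fderiv_eq]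

theorem X_const (c : ℝ) : X n L j (fun _ => c) q = 0 := by
  simp [X_eq_fderiv]

theorem X_add (hf : DifferentiableAt ℝ f q) (hg : DifferentiableAt ℝ g q) :
    X n L j (fun y => f y + g y) q = X n L j f q + X n L j g q := by
  simp only [X_eq_fderiv, fderiv_fun_add hf hg, add_apply]

theorem X_mul (hf : DifferentiableAt ℝ f q) (hg : DifferentiableAt ℝ g q) :
    X n L j (fun y => f y * g y) q = f q * X n L j g q + g q * X n L j f q := by
  simp only [X_eq_fderiv, fderiv_fun_mul hf hg, add_apply,
    smul_apply, smul_eq_mul]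

theorem X_const_mul (hf : DifferentiableAt ℝ f q) (c : ℝ) :
    X n L j (fun y => c * f y) q = c * X n L j f q := by
  simp only [X_eq_fderiv, fderiv_const_mul hf, smul_apply, smul_eq_mul]

theorem X_sq (hf : DifferentiableAt ℝ f q) :
    X n L j (fun y => f y ^ 2) q = 2 * f q * X n L j f q := by
  simp only [sq, X_mul L j hf hf]
  ring

theorem X_rpow_const (hf : DifferentiableAt ℝ f q) (hq : f q ≠ 0) (α : ℝ) :
    X n L j (fun y => f y ^ α) q = α * f q ^ (α - 1) * X n L j f q := by
  simp only [X_eq_fderiv, (hf.hasFDerivAt.rpow_const (Or.inl hq)).fderiv,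
    smul_apply, smul_eq_mul]

theorem X_sum {ι : Type*} (s : Finset ι) {f : ι → (Fin (2*n+1) → ℝ) → ℝ}
    (hf : ∀ i ∈ s, DifferentiableAt ℝ (f i) q) :
    X n L j (fun y => ∑ i ∈ s, f i y) q = ∑ i ∈ s, X n L j (f i) q := by
  simp only [X_eq_fderiv, fderiv_fun_sum hf, _root_.sum_apply]

theorem X_apply_castSucc (k : Fin (2*n)) :
    X n L j (fun y => y k.castSucc) q = if k = j then 1 else 0 := by
  simp [X_eq_fderiv, (hasFDerivAt_apply _ q).fderiv, horizontal, Pi.single_apply,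
    Fin.castSucc_ne_last]

theorem X_apply_last : X n L j (fun y => y (Fin.last _)) q = vertical L j q := by
  simp [X_eq_fderiv, (hasFDerivAt_apply _ q).fderiv, horizontal,
    (Fin.castSucc_ne_last j).symm]

end Derivation

section GaugeDerivatives

variable (L : Fin n → ℝ)

@[fun_prop] theorem differentiable_quadForm : Differentiable ℝ (quadForm L) := by
  unfold quadForm; fun_prop

@[fun_prop] theorem differentiable_quartic : Differentiable ℝ (quartic L) := by
  unfold quartic; fun_prop

@[fun_prop] theorem differentiable_radial (i : Fin (2*n)) : Differentiable ℝ (radial L i) := by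
  unfold radial; fun_prop

@[fun_prop] theorem differentiable_vertical (i : Fin (2*n)) :
    Differentiable ℝ (vertical L i) := by
  unfold vertical; fun_prop

@[fun_prop] theorem differentiable_quarticGrad (i : Fin (2*n)) :
    Differentiable ℝ (quarticGrad L i) := by
  unfold quarticGrad; fun_prop

variable (i j : Fin (2*n)) (q : Fin (2*n+1) → ℝ)

theorem X_radial : X n L i (radial L j) q = if i = j then coeff L j else 0 := by
  unfold radial
  rw [X_const_mul _ _ (by fun_prop), X_apply_castSucc]
  simp [eq_comm]

theorem X_vertical : X n L i (vertical L j) q = if i = partner j then drift L j else 0 := by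
  unfold vertical
  rw [X_const_mul _ _ (by fun_prop), X_apply_castSucc]
  simp [eq_comm]

theorem X_quadForm : X n L i (quadForm L) q = 2 * radial L i q := by
  unfold quadForm
  rw [X_sum _ _ _ (by fun_prop)]
  simp (disch := fun_prop) only [X_const_mul, X_sq, X_apply_castSucc]
  simp [radial]
  ring

theorem X_quartic : X n L i (quartic L) q = 4 * quarticGrad L i q := by
  unfold quartic
  rw [X_add _ _ (by fun_prop) (by fun_prop), X_sq _ _ (by fun_prop),
    X_const_mul _ _ (by fun_prop), X_sq _ _ (by fun_prop), X_quadForm, X_apply_last, quarticGrad]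
  ring

theorem X_quarticGrad : X n L i (quarticGrad L j) q = quarticHess L i j q := by
  unfold quarticGrad
  simp (disch := fun_prop) only [X_add, X_mul, X_radial, X_vertical, X_quadForm,
    X_apply_last, X_const]
  rw [quarticHess]
  split_ifs <;> ring

end GaugeDerivatives

section GaugePower

open Filter Topology

variable (L : Fin n → ℝ) (i j : Fin (2*n)) {q : Fin (2*n+1) → ℝ}

theorem X_quartic_rpow (hF : quartic L q ≠ 0) (γ : ℝ) :
    X n L j (fun y => quartic L y ^ (γ / 4)) q
      = γ * quartic L q ^ (γ / 4 - 1) * quarticGrad L j q := by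
  rw [X_rpow_const _ _ (by fun_prop) hF, X_quartic]
  ring

theorem X_X_quartic_rpow (hF : 0 < quartic L q) (γ : ℝ) :
    X n L i (X n L j (fun y => quartic L y ^ (γ / 4))) q
      = γ * quartic L q ^ (γ / 4 - 2)
        * ((γ - 4) * quarticGrad L i q * quarticGrad L j q
          + quartic L q * quarticHess L i j q) := by
  have hnear : X n L j (fun y => quartic L y ^ (γ / 4)) =ᶠ[𝓝 q]
      fun y => γ * (quartic L y ^ (γ / 4 - 1) * quarticGrad L j y) :=
    eventually_of_mem
      ((isOpen_lt continuous_const (differentiable_quartic L).continuous).mem_nhds hF)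
      fun y hy => by rw [X_quartic_rpow L j hy.ne']; ring
  have hdiff : DifferentiableAt ℝ (fun y => quartic L y ^ (γ / 4 - 1)) q :=
    (differentiable_quartic L q).rpow_const (Or.inl hF.ne')
  have hdiff' : DifferentiableAt ℝ (fun y => quartic L y ^ (γ / 4 - 1) * quarticGrad L j y) q :=
    hdiff.mul (by fun_prop)
  rw [X_congr L i hnear, X_const_mul _ _ hdiff', X_mul _ _ hdiff (by fun_prop),
    X_rpow_const _ _ (by fun_prop) hF.ne', X_quartic, X_quarticGrad,
    show γ / 4 - 1 = γ / 4 - 2 + 1 by ring, Real.rpow_add_one hF.ne', add_sub_cancel_right]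
  ring

end GaugePower

end AnisotropicHeisenberg

open AnisotropicHeisenberg in
theorem rho_power_weighted_p_harmonic
    (n : ℕ) (L : Fin n → ℝ) (hL : ∀ j, L j ≠ 0)
    (p : ℝ) (hp : 1 < p)
    (u : (Fin (2*n+1) → ℝ) → ℝ)
    (hu : u = fun q => (rho n L q) ^ ((p - (2 * n + 2)) / (p - 1))) :
    ∀ q : Fin (2*n+1) → ℝ, q ≠ 0 → Mfun n L u q ≠ 0 →
      (Mfun n L u q) ^ (p - 2) * ∑ i : Fin (2*n), wgt n L i * X n L i (X n L i u) q
        + (p - 2) * (Mfun n L u q) ^ (p - 4) *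
            ∑ i : Fin (2*n), ∑ j : Fin (2*n),
              wgt n L i * wgt n L j * X n L i (X n L j u) q * X n L i u q * X n L j u q
      = 0 := by
  intro q hq hM
  set γ := (p - (2 * n + 2)) / (p - 1) with hγ
  have hF := quartic_pos q hL hq
  obtain rfl : u = fun y => quartic L y ^ (γ / 4) := hu.trans (funext fun y => rho_rpow L y γ)
  change weightedPLaplacian (wgt n L) (fun i => X n L i _ q) (fun i j => X n L i (X n L j _) q) p
    = 0
  rw [Mfun] at hM
  simp only [X_quartic_rpow L _ hF.ne', X_X_quartic_rpow L _ _ hF] at hM ⊢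
  refine weightedPLaplacian_radial_eq_zero (Q := 2 * n + 2) _ _ (sum_wgt_grad_sq q hL)
    ?_ (sum_wgt_grad_hess_grad q hL) ?_ hM
  · rw [sum_wgt_hess_self q hL]; ring
  · rw [hγ, div_mul_cancel₀ _ (sub_ne_zero.2 hp.ne')]
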